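/- If c is real, the map f_{α,c} has at most four fixed points in ℂ. -/

import Mathlib

open Real Set

private lemma pair_cover {β : Type*} (T : Set β)
    (h : ∀ a ∈ T, ∀ b ∈ T, ∀ c ∈ T, a = b ∨ a = c ∨ b = c) :
    ∃ S : Finset β, S.card ≤ 2 ∧ T ⊆ ↑S := by
  classical
  rcases T.eq_empty_or_nonempty with rfl | ⟨a, ha⟩
  · exact ⟨∅, by simp⟩
  by_cases hb : ∃ b ∈ T, b ≠ a
  · obtain ⟨b, hbT, hba⟩ := hb
    refine ⟨{a, b}, ?_, ?_⟩
    · exact (Finset.card_insert_le _ _).trans (by simp)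
    · intro x hx
      rcases h a ha b hbT x hx with h1 | h1 | h1
      · exact absurd h1.symm hba
      · simp [← h1]
      · simp [← h1]
  · push_neg at hb
    exact ⟨{a}, by simp, fun x hx => by simp [hb x hx]⟩

private lemma single_cover {β : Type*} (T : Set β)
    (h : ∀ a ∈ T, ∀ b ∈ T, a = b) :
    ∃ S : Finset β, S.card ≤ 1 ∧ T ⊆ ↑S := by
  classical
  rcases T.eq_empty_or_nonempty with rfl | ⟨a, ha⟩
  · exact ⟨∅, by simp⟩
  · exact ⟨{a}, by simp, fun x hx => by simp [h x hx a ha]⟩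

private lemma three_collinear {g : ℝ → ℝ} {s : Set ℝ} (hg : StrictConvexOn ℝ s g)
    {p q a b c : ℝ} (ha : a ∈ s) (hc : c ∈ s)
    (hab : a < b) (hbc : b < c)
    (ea : g a = p * a + q) (eb : g b = p * b + q) (ec : g c = p * c + q) : False := by
  have hac : a < c := hab.trans hbc
  have hca : 0 < c - a := by linarith
  have ht0 : (0:ℝ) < (c - b) / (c - a) := div_pos (by linarith) hca
  have ht1 : (0:ℝ) < 1 - (c - b) / (c - a) := by
    have : (c - b) / (c - a) < 1 := (div_lt_one hca).2 (by linarith)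
    linarith
  have key := hg.2 ha hc hac.ne ht0 ht1 (by ring)
  have hb' : ((c - b) / (c - a)) • a + (1 - (c - b) / (c - a)) • c = b := by
    simp only [smul_eq_mul]
    field_simp
    ring
  rw [hb', ea, eb, ec] at key
  simp only [smul_eq_mul] at key
  have hcomb : (c - b) / (c - a) * a + (1 - (c - b) / (c - a)) * c = b := by
    field_simp; ring
  have h2 : (c - b) / (c - a) * (p * a + q) + (1 - (c - b) / (c - a)) * (p * c + q)
      = p * b + q := by linear_combination p * hcomb
  linarith [key, h2]

private lemma three_roots {α c : ℝ} (h2α : 1 < 2 * α) {x y z : ℝ}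
    (hx : 0 ≤ x) (hy : 0 ≤ y) (hz : 0 ≤ z) (hxy : x ≠ y) (hxz : x ≠ z) (hyz : y ≠ z)
    (ex : x ^ (2*α) = x - c) (ey : y ^ (2*α) = y - c) (ez : z ^ (2*α) = z - c) : False := by
  have H : ∀ a b d : ℝ, 0 ≤ a → 0 ≤ d → a < b → b < d →
      a ^ (2*α) = a - c → b ^ (2*α) = b - c → d ^ (2*α) = d - c → False := by
    intro a b d ha hd hab hbd ea eb ed
    exact three_collinear (p := 1) (q := -c) (strictConvexOn_rpow h2α)
      (mem_Ici.2 ha) (mem_Ici.2 hd) hab hbd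
      (by rw [ea]; ring) (by rw [eb]; ring) (by rw [ed]; ring)
  rcases lt_trichotomy x y with h1 | h1 | h1
  · rcases lt_trichotomy y z with h2 | h2 | h2
    · exact H x y z hx hz h1 h2 ex ey ez
    · exact hyz h2
    · rcases lt_trichotomy x z with h3 | h3 | h3
      · exact H x z y hx hy h3 h2 ex ez ey
      · exact hxz h3
      · exact H z x y hz hy h3 h1 ez ex ey
  · exact hxy h1
  · rcases lt_trichotomy x z with h2 | h2 | h2
    · exact H y x z hy hz h1 h2 ey ex ez
    · exact hxz h2
    · rcases lt_trichotomy y z with h3 | h3 | h3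
      · exact H y z x hy hx h3 h2 ey ez ex
      · exact hyz h3
      · exact H z y x hz hx h3 h1 ez ey ex

private lemma abs_rpow_mul_sq {α : ℝ} (hα : 1 / 2 < α) (x : ℝ) :
    |x| ^ (2 * α - 2) * x ^ 2 = |x| ^ (2 * α) := by
  rcases eq_or_ne x 0 with rfl | hx
  · simp [Real.zero_rpow (by linarith : (0:ℝ) < 2 * α).ne']
  · have h1 : (0:ℝ) < |x| := abs_pos.2 hx
    rw [← sq_abs, ← Real.rpow_natCast |x| 2, ← Real.rpow_add h1]
    norm_num

noncomputable def f (α : ℝ) (c : ℂ) (z : ℂ) : ℂ :=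
  ((‖z‖ ^ (2 * α - 2) : ℝ) : ℂ) * z ^ 2 + c

theorem at_most_four_fixed_points (α : ℝ) (hα : 1 / 2 < α) (c : ℝ) :
    ∃ S : Finset ℂ, S.card ≤ 4 ∧ ∀ z : ℂ, f α (c : ℂ) z = z → z ∈ S := by
  classical
  have h2α : (1:ℝ) < 2 * α := by linarith
  -- the two real equations satisfied by a fixed point
  have key : ∀ z : ℂ, f α (c : ℂ) z = z →
      ‖z‖ ^ (2*α-2) * (2 * z.re * z.im) = z.im ∧
      ‖z‖ ^ (2*α-2) * (z.re^2 - z.im^2) + c = z.re := by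
    intro z hz
    unfold f at hz
    have him := congrArg Complex.im hz
    have hre := congrArg Complex.re hz
    simp [Complex.add_im, Complex.add_re, Complex.mul_im, Complex.mul_re, pow_two]
      at him hre
    exact ⟨by linear_combination him, by linear_combination hre⟩
  -- real fixed points
  have realeq : ∀ z : ℂ, f α (c : ℂ) z = z → z.im = 0 → |z.re| ^ (2*α) + c = z.re := by
    intro z hz h0
    have h2 := (key z hz).2
    have habs : ‖z‖ = |z.re| := by
      rw [Complex.norm_def, Complex.normSq_apply, h0]
      simp [Real.sqrt_mul_self_eq_abs]
    rw [habs, h0] at h2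
    have := abs_rpow_mul_sq hα z.re
    nlinarith [h2, this]
  -- facts about nonreal fixed points
  have imfacts : ∀ z : ℂ, f α (c : ℂ) z = z → z.im ≠ 0 →
      0 < ‖z‖ ∧ 0 < c ∧ ‖z‖ ^ (2*α) = c ∧
      2 * (‖z‖ ^ (2*α-2)) * z.re = 1 ∧
      z.im ^ 2 = ‖z‖ ^ 2 - z.re ^ 2 := by
    intro z hz hy
    obtain ⟨h1, h2⟩ := key z hz
    have h2kx : 2 * (‖z‖ ^ (2*α-2)) * z.re = 1 := by
      have h1' : (2 * (‖z‖ ^ (2*α-2)) * z.re) * z.im = 1 * z.im := by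
        linear_combination h1
      exact mul_right_cancel₀ hy h1'
    have hzne : z ≠ 0 := fun h => hy (by simp [h])
    have hr : 0 < ‖z‖ := norm_pos_iff.mpr hzne
    have hr2 : ‖z‖ ^ 2 = z.re^2 + z.im^2 := by
      rw [Complex.sq_norm, Complex.normSq_apply]; ring
    have hkr2 : ‖z‖ ^ (2*α-2) * ‖z‖ ^ 2 = c := by
      linear_combination ‖z‖ ^ (2*α-2) * hr2 - h2 + z.re * h2kx
    have hc' : ‖z‖ ^ (2*α) = c := by
      rw [← hkr2, ← Real.rpow_natCast (‖z‖) 2, ← Real.rpow_add hr]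
      norm_num
    have hcpos : 0 < c := hc' ▸ Real.rpow_pos_of_pos hr _
    exact ⟨hr, hcpos, hc', h2kx, by linarith [hr2]⟩
  -- cover of the nonnegative real fixed points
  obtain ⟨SA, hSAcard, hSA⟩ := pair_cover
    {z : ℂ | f α (c : ℂ) z = z ∧ z.im = 0 ∧ 0 ≤ z.re} (by
      rintro a ⟨hfa, ha0, hare⟩ b ⟨hfb, hb0, hbre⟩ d ⟨hfd, hd0, hdre⟩
      by_contra hne
      push_neg at hne
      have ea : a.re ^ (2*α) = a.re - c := by
        have := realeq a hfa ha0; rw [abs_of_nonneg hare] at this; linarith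
      have eb : b.re ^ (2*α) = b.re - c := by
        have := realeq b hfb hb0; rw [abs_of_nonneg hbre] at this; linarith
      have ed : d.re ^ (2*α) = d.re - c := by
        have := realeq d hfd hd0; rw [abs_of_nonneg hdre] at this; linarith
      exact three_roots h2α hare hbre hdre
        (fun h => hne.1 (Complex.ext h (ha0.trans hb0.symm)))
        (fun h => hne.2.1 (Complex.ext h (ha0.trans hd0.symm)))
        (fun h => hne.2.2 (Complex.ext h (hb0.trans hd0.symm))) ea eb ed)
  by_cases hcpos : 0 < c
  · -- c > 0 : no negative real fixed points, at most 2 nonreal ones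
    obtain ⟨SC, hSCcard, hSC⟩ := pair_cover
      {z : ℂ | f α (c : ℂ) z = z ∧ z.im ≠ 0} (by
        rintro a ⟨hfa, ha⟩ b ⟨hfb, hb⟩ d ⟨hfd, hd⟩
        obtain ⟨ra, -, ca, ka, ya⟩ := imfacts a hfa ha
        obtain ⟨rb, -, cb, kb, yb⟩ := imfacts b hfb hb
        obtain ⟨rd, -, cd', kd, yd⟩ := imfacts d hfd hd
        -- all moduli are equal
        have hreq : ∀ u v : ℝ, 0 < u → 0 < v → u ^ (2*α) = c → v ^ (2*α) = c → u = v := by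
          intro u v hu hv h1 h2
          rcases lt_trichotomy u v with h | h | h
          · exfalso
            have := Real.rpow_lt_rpow hu.le h (by linarith : (0:ℝ) < 2*α)
            rw [h1, h2] at this; exact lt_irrefl _ this
          · exact h
          · exfalso
            have := Real.rpow_lt_rpow hv.le h (by linarith : (0:ℝ) < 2*α)
            rw [h1, h2] at this; exact lt_irrefl _ this
        have hab : ‖a‖ = ‖b‖ := hreq _ _ ra rb ca cb
        have had : ‖a‖ = ‖d‖ := hreq _ _ ra rd ca cd'
        -- real parts equal
        have hk0 : ‖a‖ ^ (2*α-2) ≠ 0 := by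
          intro h; rw [h] at ka; norm_num at ka
        have hxab : a.re = b.re := by
          rw [← hab] at kb
          have h' : (2 * ‖a‖ ^ (2*α-2)) * a.re
              = (2 * ‖a‖ ^ (2*α-2)) * b.re := by
            linear_combination ka - kb
          exact mul_left_cancel₀ (mul_ne_zero two_ne_zero hk0) h'
        have hxad : a.re = d.re := by
          rw [← had] at kd
          have h' : (2 * ‖a‖ ^ (2*α-2)) * a.re
              = (2 * ‖a‖ ^ (2*α-2)) * d.re := by
            linear_combination ka - kd
          exact mul_left_cancel₀ (mul_ne_zero two_ne_zero hk0) h'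
        have hyab : a.im^2 = b.im^2 := by rw [ya, yb, ← hab, ← hxab]
        have hyad : a.im^2 = d.im^2 := by rw [ya, yd, ← had, ← hxad]
        have e1 : (a.im - b.im) * (a.im + b.im) = 0 := by linear_combination hyab
        rcases mul_eq_zero.1 e1 with h | h
        · exact Or.inl (Complex.ext hxab (by linarith))
        have e2 : (a.im - d.im) * (a.im + d.im) = 0 := by linear_combination hyad
        rcases mul_eq_zero.1 e2 with h' | h'
        · exact Or.inr (Or.inl (Complex.ext hxad (by linarith)))
        · refine Or.inr (Or.inr (Complex.ext ?_ ?_))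
          · rw [← hxab, hxad]
          · linarith)
    have hneg : ∀ z : ℂ, f α (c : ℂ) z = z → z.im = 0 → 0 ≤ z.re := by
      intro z hz h0
      by_contra hlt
      push_neg at hlt
      have h1 := realeq z hz h0
      have h2 : (0:ℝ) ≤ |z.re| ^ (2*α) := Real.rpow_nonneg (abs_nonneg _) _
      linarith
    refine ⟨SA ∪ SC, (Finset.card_union_le _ _).trans (by omega), ?_⟩
    intro z hz
    rcases eq_or_ne z.im 0 with h0 | h0
    · exact Finset.mem_union_left _ (hSA ⟨hz, h0, hneg z hz h0⟩)
    · exact Finset.mem_union_right _ (hSC ⟨hz, h0⟩)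
  · -- c ≤ 0 : no nonreal fixed points, at most 1 negative real fixed point
    obtain ⟨SB, hSBcard, hSB⟩ := single_cover
      {z : ℂ | f α (c : ℂ) z = z ∧ z.im = 0 ∧ z.re < 0} (by
        rintro a ⟨hfa, ha0, haneg⟩ b ⟨hfb, hb0, hbneg⟩
        have ea := realeq a hfa ha0
        have eb := realeq b hfb hb0
        rw [abs_of_neg haneg] at ea
        rw [abs_of_neg hbneg] at eb
        have hre : a.re = b.re := by
          by_contra hne
          rcases lt_or_gt_of_ne hne with h | h
          · have := Real.rpow_lt_rpow (by linarith : (0:ℝ) ≤ -b.re)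
              (by linarith : -b.re < -a.re) (by linarith : (0:ℝ) < 2*α)
            linarith
          · have := Real.rpow_lt_rpow (by linarith : (0:ℝ) ≤ -a.re)
              (by linarith : -a.re < -b.re) (by linarith : (0:ℝ) < 2*α)
            linarith
        exact Complex.ext hre (ha0.trans hb0.symm))
    refine ⟨SA ∪ SB, (Finset.card_union_le _ _).trans (by omega), ?_⟩
    intro z hz
    rcases eq_or_ne z.im 0 with h0 | h0
    · rcases lt_or_ge z.re 0 with h1 | h1
      · exact Finset.mem_union_right _ (hSB ⟨hz, h0, h1⟩)
      · exact Finset.mem_union_left _ (hSA ⟨hz, h0, h1⟩)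
    · exact absurd (imfacts z hz h0).2.1 hcpos
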